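/- Let U ⊆ ℂ be a bounded connected open set, and let W_n, W ⊆ U be bounded connected open sets with 0 ∈ W_n for all n and 0 ∈ W. If d_H(closure(W_n), closure(W)) → 0 and d_H(∂W_n, ∂W) → 0 (Hausdorff distances), then η_{W_n}(p) → η_W(p) for every p ∈ W. (This combines Theorem 1.9 and Theorem 1.4 of the paper, in the case of the trivial single-leaf nonsingular foliation of U.) -/

import Mathlib

/-!
Lower bound: a map `f : 𝔻 → W₀` almost realising `η_{W₀}(p)` sends each disc `|z| ≤ t < 1` onto
a compact subset of `W₀`. Hausdorff convergence of the sets and of their frontiers forces every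
compact subset of `W₀` into `W n` for large `n` (a small ball around a point of `W₀` meets `W n`
but not its frontier), so `z ↦ f (t z)` competes for `η_{W n}(p)`.

Upper bound: along a subsequence pick maps `𝔻 → W n` with `|f'(0)|` above `c > η_{W₀}(p)`. They
are uniformly bounded, so by Montel a further subsequence converges locally uniformly to some `g`
with `g 0 = p` and `|g'(0)| ≥ c > 0`. The limit takes values in `closure W₀`. By Hurwitz's
argument, each value of the nonconstant `g` is surrounded, for large `n`, by a disc of values of
the approximants, i.e. a disc inside `W n`; at a point of `∂W₀` this contradicts the convergence
of the frontiers. So `g` maps `𝔻` into `W₀`, whence `|g'(0)| ≤ η_{W₀}(p) < c`.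
-/

open Filter Metric Topology Set

noncomputable def eta (Ω : Set ℂ) (p : ℂ) : ℝ :=
  sSup {r : ℝ | ∃ f : ℂ → ℂ, DifferentiableOn ℂ f (ball (0 : ℂ) 1) ∧ f 0 = p ∧
    (∀ z ∈ ball (0 : ℂ) 1, f z ∈ Ω) ∧ r = ‖deriv f 0‖}

theorem Set.MapsTo.closedBall_apply {α E : Type*} [PseudoMetricSpace E] {f : α → E} {s : Set α}
    {c : E} {R : ℝ} (hf : MapsTo f s (closedBall c R)) {a : α} (ha : a ∈ s) :
    MapsTo f s (closedBall (f a) (2 * R)) := fun x hx => by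
  rw [mem_closedBall]
  linarith [dist_triangle_right (f x) (f a) c, mem_closedBall.1 (hf hx), mem_closedBall.1 (hf ha)]

section Hausdorff

variable {ι X : Type*} {l : Filter ι}

theorem tendsto_hausdorffEDist_of_tendsto_hausdorffDist [PseudoMetricSpace X] {s : ι → Set X}
    {t : Set X} (hfin : ∀ i, hausdorffEDist (s i) t ≠ ⊤)
    (h : Tendsto (fun i => hausdorffDist (s i) t) l (𝓝 0)) :
    Tendsto (fun i => hausdorffEDist (s i) t) l (𝓝 0) := by
  rwa [← ENNReal.tendsto_toReal_iff hfin ENNReal.zero_ne_top]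

theorem eventually_forall_exists_dist_lt [PseudoMetricSpace X] {s : ι → Set X} {t : Set X}
    (h : Tendsto (fun i => hausdorffEDist (s i) t) l (𝓝 0)) {ε : ℝ} (hε : 0 < ε) :
    ∀ᶠ i in l, (∀ x ∈ s i, ∃ y ∈ t, dist x y < ε) ∧ ∀ y ∈ t, ∃ x ∈ s i, dist x y < ε := by
  filter_upwards [(tendsto_order.1 h).2 _ (ENNReal.ofReal_pos.2 hε)] with i hi
  refine ⟨fun x hx => ?_, fun y hy => ?_⟩
  · obtain ⟨y, hy, hxy⟩ := exists_edist_lt_of_hausdorffEDist_lt hx hi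
    exact ⟨y, hy, edist_lt_ofReal.1 hxy⟩
  · rw [hausdorffEDist_comm] at hi
    obtain ⟨x, hx, hyx⟩ := exists_edist_lt_of_hausdorffEDist_lt hy hi
    exact ⟨x, hx, dist_comm x y ▸ edist_lt_ofReal.1 hyx⟩

theorem hausdorffEDist_frontier_ne_top [NormedAddCommGroup X] [NormedSpace ℝ X] [Nontrivial X]
    {s t : Set X} (hs : s.Nonempty) (ht : t.Nonempty) (hsb : Bornology.IsBounded s)
    (htb : Bornology.IsBounded t) : hausdorffEDist (frontier s) (frontier t) ≠ ⊤ := by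
  have hfrontier {u : Set X} (hu : u.Nonempty) (hub : Bornology.IsBounded u) :
      (frontier u).Nonempty :=
    nonempty_frontier_iff.2 ⟨hu, fun h => NormedSpace.unbounded_univ ℝ X (h ▸ hub)⟩
  exact hausdorffEDist_ne_top_of_nonempty_of_bounded (hfrontier hs hsb) (hfrontier ht htb)
    (hsb.closure.subset frontier_subset_closure) (htb.closure.subset frontier_subset_closure)

theorem eventually_subset_of_tendsto_hausdorffEDist [NormedAddCommGroup X] [NormedSpace ℝ X]
    {V : ι → Set X} {V₀ : Set X} (hV : ∀ i, IsOpen (V i)) (hV₀ : IsOpen V₀)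
    (hcl : Tendsto (fun i => hausdorffEDist (V i) V₀) l (𝓝 0))
    (hbd : Tendsto (fun i => hausdorffEDist (frontier (V i)) (frontier V₀)) l (𝓝 0))
    {K : Set X} (hK : IsCompact K) (hKV₀ : K ⊆ V₀) : ∀ᶠ i in l, K ⊆ V i := by
  obtain ⟨δ, hδ, hKδ⟩ := hK.exists_thickening_subset_open hV₀ hKV₀
  filter_upwards [eventually_forall_exists_dist_lt hcl (half_pos hδ),
    eventually_forall_exists_dist_lt hbd (half_pos hδ)] with i hVV₀ hfrontier x hx
  obtain ⟨-, hnear⟩ := hVV₀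
  obtain ⟨hfr, -⟩ := hfrontier
  obtain ⟨y, hy, hyx⟩ := hnear x (hKV₀ hx)
  -- the ball meets `V i` near `y`, and a point of `∂(V i)` in it would put a point of `∂V₀` in `V₀`
  have hball : ball x (δ / 2) ⊆ V i := by
    refine (convex_ball x _).isPreconnected.subset_of_closure_inter_subset (hV i)
      ⟨y, mem_ball.2 hyx, hy⟩ ?_
    rintro z ⟨hzcl, hz⟩
    by_contra hzV
    obtain ⟨w, hw, hzw⟩ := hfr z ⟨hzcl, by rwa [(hV i).interior_eq]⟩
    have hwV₀ : w ∈ V₀ := hKδ (mem_thickening_iff.2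
      ⟨x, hx, by linarith [dist_triangle w z x, mem_ball.1 hz, dist_comm z w]⟩)
    exact hV₀.inter_frontier_eq.subset ⟨hwV₀, hw⟩
  exact hball (mem_ball_self (half_pos hδ))

end Hausdorff

theorem exists_subseq_forall_cauchySeq {X E : Type*} [PseudoMetricSpace E] {F : ℕ → X → E}
    {D : Set X} (hD : D.Countable) {Q : Set E} (hQ : IsCompact Q)
    (hFQ : ∀ k, ∀ y ∈ D, F k y ∈ Q) :
    ∃ φ : ℕ → ℕ, StrictMono φ ∧ ∀ y ∈ D, CauchySeq fun k => F (φ k) y := by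
  have := hD.to_subtype
  obtain ⟨_, -, φ, hφ, hlim⟩ := (isCompact_univ_pi fun _ : D => hQ).tendsto_subseq
    (x := fun k (y : D) => F k y) fun k => mem_univ_pi.2 fun y => hFQ k y y.2
  exact ⟨φ, hφ, fun y hy => (tendsto_pi_nhds.1 hlim ⟨y, hy⟩).cauchySeq⟩

theorem uniformCauchySeqOn_of_equicontinuousAt {X α : Type*} [TopologicalSpace X]
    [PseudoMetricSpace α] {F : ℕ → X → α} {K D : Set X} (hK : IsCompact K)
    (hF : ∀ x ∈ K, EquicontinuousAt F x) (hKD : K ⊆ closure D)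
    (hD : ∀ y ∈ D, CauchySeq fun k => F k y) : UniformCauchySeqOn F atTop K := by
  rw [Metric.uniformCauchySeqOn_iff]
  intro ε hε
  have hV : ∀ x ∈ K, {z | ∀ k, dist (F k x) (F k z) < ε / 5} ∈ 𝓝 x := fun x hx =>
    Metric.equicontinuousAt_iff_right.1 (hF x hx) _ (by positivity)
  have hN : ∀ x ∈ K, ∃ N, ∀ m ≥ N, ∀ n ≥ N, ∀ z, (∀ k, dist (F k x) (F k z) < ε / 5) →
      dist (F m z) (F n z) < ε := by
    intro x hx
    obtain ⟨y, hyx, hyD⟩ := mem_closure_iff_nhds.1 (hKD hx) _ (hV x hx)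
    obtain ⟨N, hN⟩ := Metric.cauchySeq_iff.1 (hD y hyD) (ε / 5) (by positivity)
    refine ⟨N, fun m hm n hn z hzx => ?_⟩
    -- five steps of size `ε / 5`: `F m z, F m x, F m y, F n y, F n x, F n z`
    linarith [hN m hm n hn, hyx m, hyx n, hzx m, hzx n, dist_comm (F m x) (F m z),
      dist_comm (F n y) (F n x), dist_triangle (F m z) (F n y) (F n z),
      dist_triangle4 (F m z) (F m x) (F m y) (F n y), dist_triangle (F n y) (F n x) (F n z)]
  choose! N hN using hN
  obtain ⟨t, htK, hKt⟩ := hK.elim_nhds_subcover _ hV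
  refine ⟨t.sup N, fun m hm n hn z hz => ?_⟩
  obtain ⟨x, hxt, hzx⟩ := mem_iUnion₂.1 (hKt hz)
  exact hN x (htK x hxt) m ((Finset.le_sup hxt).trans hm) n ((Finset.le_sup hxt).trans hn) z hzx

theorem equicontinuousAt_of_norm_le {ι : Type*} {F : ι → ℂ → ℂ} {U : Set ℂ} {M : ℝ}
    (hU : IsOpen U) (hF : ∀ i, DifferentiableOn ℂ (F i) U) (hFM : ∀ i, ∀ z ∈ U, ‖F i z‖ ≤ M)
    {z₀ : ℂ} (hz₀ : z₀ ∈ U) : EquicontinuousAt F z₀ := by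
  obtain ⟨ρ, hρ, hρU⟩ := Metric.isOpen_iff.1 hU z₀ hz₀
  refine Metric.equicontinuousAt_of_continuity_modulus (fun z => 2 * M / ρ * dist z z₀) ?_ F ?_
  · have hcont : Continuous fun z => 2 * M / ρ * dist z z₀ :=
      continuous_const.mul (continuous_id.dist continuous_const)
    simpa using hcont.tendsto z₀
  · filter_upwards [ball_mem_nhds z₀ hρ] with z hz i
    have hmaps : MapsTo (F i) (ball z₀ ρ) (closedBall 0 M) := fun w hw =>
      mem_closedBall_zero_iff.2 (hFM i w (hρU hw))
    rw [dist_comm]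
    exact Complex.dist_le_div_mul_dist_of_mapsTo_ball ((hF i).mono hρU)
      (hmaps.closedBall_apply (mem_ball_self hρ)) hz

theorem exists_subseq_tendstoLocallyUniformlyOn_of_norm_le {F : ℕ → ℂ → ℂ} {U : Set ℂ} {M : ℝ}
    (hU : IsOpen U) (hF : ∀ k, DifferentiableOn ℂ (F k) U) (hFM : ∀ k, ∀ z ∈ U, ‖F k z‖ ≤ M) :
    ∃ g : ℂ → ℂ, ∃ φ : ℕ → ℕ, StrictMono φ ∧
      TendstoLocallyUniformlyOn (fun k => F (φ k)) g atTop U := by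
  obtain ⟨D, hDU, hDc, hUD⟩ :=
    (TopologicalSpace.IsSeparable.of_separableSpace U).exists_countable_dense_subset
  obtain ⟨φ, hφ, hcauchy⟩ := exists_subseq_forall_cauchySeq hDc (isCompact_closedBall 0 M)
    fun k y hy => mem_closedBall_zero_iff.2 (hFM k y (hDU hy))
  have hunif : ∀ K ⊆ U, IsCompact K → UniformCauchySeqOn (fun k => F (φ k)) atTop K :=
    fun K hKU hK => uniformCauchySeqOn_of_equicontinuousAt hK
      (fun x hx => equicontinuousAt_of_norm_le hU (fun k => hF (φ k)) (fun k => hFM (φ k)) (hKU hx))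
      (hKU.trans hUD) hcauchy
  refine ⟨fun z => limUnder atTop fun k => F (φ k) z, φ, hφ,
    (tendstoLocallyUniformlyOn_iff_forall_isCompact hU).2 fun K hKU hK =>
      (hunif K hKU hK).tendstoUniformlyOn_of_tendsto fun z hz => ?_⟩
  exact ((hunif {z} (singleton_subset_iff.2 (hKU hz)) isCompact_singleton).cauchySeq
    rfl).tendsto_limUnder

/-- Minimum modulus principle, via the maximum modulus principle for `1 / (f - q)`. -/
theorem exists_eq_of_dist_lt_of_le_dist_on_sphere {f : ℂ → ℂ} {z₀ q : ℂ} {ρ m : ℝ}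
    (hρ : 0 < ρ) (hf : DiffContOnCl ℂ f (ball z₀ ρ)) (hcen : dist (f z₀) q < m)
    (hsph : ∀ z ∈ sphere z₀ ρ, m ≤ dist (f z) q) : ∃ z ∈ closedBall z₀ ρ, f z = q := by
  by_contra! hne
  have hm : 0 < m := dist_nonneg.trans_lt hcen
  have hinv : DiffContOnCl ℂ (fun z => f z - q)⁻¹ (ball z₀ ρ) :=
    (hf.sub_const q).inv fun z hz =>
      sub_ne_zero.2 (hne z (closure_ball z₀ hρ.ne' ▸ hz))
  have hmax := Complex.norm_le_of_forall_mem_frontier_norm_le isBounded_ball hinv (C := m⁻¹)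
    (fun z hz => by
      rw [frontier_ball z₀ hρ.ne'] at hz
      simpa [← dist_eq_norm] using inv_anti₀ hm (hsph z hz))
    (subset_closure (mem_ball_self hρ))
  have hcen' : m⁻¹ < (dist (f z₀) q)⁻¹ :=
    inv_strictAnti₀ (dist_pos.2 (hne z₀ (mem_closedBall_self hρ.le))) hcen
  simp only [Pi.inv_apply, norm_inv, ← dist_eq_norm] at hmax
  exact hcen'.not_ge hmax

theorem eventually_ball_subset_image_of_tendstoLocallyUniformlyOn {ι : Type*} {l : Filter ι}
    [l.NeBot] {F : ι → ℂ → ℂ} {g : ℂ → ℂ} {U : Set ℂ} (hU : IsOpen U)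
    (hF : ∀ i, DifferentiableOn ℂ (F i) U) (hFg : TendstoLocallyUniformlyOn F g l U)
    {z₀ : ℂ} (hz₀ : z₀ ∈ U) (hg : ∀ᶠ z in 𝓝[≠] z₀, g z ≠ g z₀) :
    ∃ ε > 0, ∀ᶠ i in l, ball (g z₀) ε ⊆ F i '' U := by
  obtain ⟨ρ, hρ, hρsub⟩ := nhds_basis_closedBall.mem_iff.1
    (inter_mem (hU.mem_nhds hz₀) (eventually_nhdsWithin_iff.1 hg))
  have hρU : closedBall z₀ ρ ⊆ U := fun z hz => (hρsub hz).1
  have hgc : ContinuousOn g U :=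
    hFg.continuousOn (Frequently.of_forall fun i => (hF i).continuousOn)
  obtain ⟨m, hm, hmg⟩ : ∃ m > 0, ∀ z ∈ sphere z₀ ρ, m ≤ dist (g z) (g z₀) :=
    (isCompact_sphere z₀ ρ).exists_forall_le'
      (continuous_dist.comp_continuousOn
        ((hgc.mono (sphere_subset_closedBall.trans hρU)).prodMk continuousOn_const))
      fun z hz => dist_pos.2 ((hρsub (sphere_subset_closedBall hz)).2 (ne_of_mem_sphere hz hρ.ne'))
  have hunif := (tendstoLocallyUniformlyOn_iff_forall_isCompact hU).1 hFg _ hρU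
    (isCompact_closedBall z₀ ρ)
  refine ⟨m / 4, by positivity, ?_⟩
  filter_upwards [Metric.tendstoUniformlyOn_iff.1 hunif (m / 4) (by positivity)] with i hi q hq
  rw [mem_ball] at hq
  obtain ⟨z, hz, rfl⟩ := exists_eq_of_dist_lt_of_le_dist_on_sphere (q := q) (m := m / 2) hρ
    ((hF i).diffContOnCl_ball hρU)
    (by linarith [hi z₀ (mem_closedBall_self hρ.le), dist_triangle (F i z₀) (g z₀) q,
      dist_comm (g z₀) (F i z₀), dist_comm q (g z₀)])
    (fun z hz => by
      linarith [hi z (sphere_subset_closedBall hz), hmg z hz,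
        dist_triangle4 (g z) (F i z) q (g z₀)])
  exact ⟨z, hρU hz, rfl⟩

theorem eventually_ne_of_deriv_ne_zero {g : ℂ → ℂ} {U : Set ℂ} (hU : IsOpen U)
    (hUc : IsPreconnected U) (hg : DifferentiableOn ℂ g U) {z₁ : ℂ} (hz₁ : z₁ ∈ U)
    (hg' : deriv g z₁ ≠ 0) {z₀ : ℂ} (hz₀ : z₀ ∈ U) : ∀ᶠ z in 𝓝[≠] z₀, g z ≠ g z₀ := by
  have hgan := hg.analyticOnNhd hU
  refine ((hgan z₀ hz₀).eventually_eq_or_eventually_ne analyticAt_const).resolve_left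
    fun hconst => hg' ?_
  have heq : EqOn g (fun _ => g z₀) U :=
    hgan.eqOn_of_preconnected_of_eventuallyEq analyticOnNhd_const hUc hz₀ hconst
  rw [(eventuallyEq_of_mem (hU.mem_nhds hz₁) heq).deriv_eq, deriv_const]

theorem mapsTo_of_tendstoLocallyUniformlyOn {ι : Type*} {l : Filter ι} [l.NeBot]
    {V : ι → Set ℂ} {V₀ : Set ℂ} (hV : ∀ i, IsOpen (V i)) (hV₀ : IsOpen V₀)
    (hcl : Tendsto (fun i => hausdorffEDist (V i) V₀) l (𝓝 0))
    (hbd : Tendsto (fun i => hausdorffEDist (frontier (V i)) (frontier V₀)) l (𝓝 0))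
    {F : ι → ℂ → ℂ} {g : ℂ → ℂ} {U : Set ℂ} (hU : IsOpen U)
    (hF : ∀ i, DifferentiableOn ℂ (F i) U) (hFV : ∀ i, MapsTo (F i) U (V i))
    (hFg : TendstoLocallyUniformlyOn F g l U) (hg : ∀ z ∈ U, ∀ᶠ w in 𝓝[≠] z, g w ≠ g z) :
    MapsTo g U V₀ := by
  intro z hz
  have hclosure : g z ∈ closure V₀ := by
    refine Metric.mem_closure_iff.2 fun ε hε => ?_
    obtain ⟨i, hi, hnear⟩ := (((hFg.tendsto_at hz).eventually (ball_mem_nhds _ (half_pos hε))).and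
      (eventually_forall_exists_dist_lt hcl (half_pos hε))).exists
    obtain ⟨y, hy, hFy⟩ := hnear.1 _ (hFV i hz)
    exact ⟨y, hy, by linarith [dist_triangle (g z) (F i z) y, mem_ball'.1 hi]⟩
  have hfrontier : g z ∉ frontier V₀ := by
    intro hgz
    obtain ⟨ε, hε, hball⟩ :=
      eventually_ball_subset_image_of_tendstoLocallyUniformlyOn hU hF hFg hz (hg z hz)
    obtain ⟨i, hi, hnear⟩ := (hball.and (eventually_forall_exists_dist_lt hbd hε)).exists
    obtain ⟨x, hx, hxg⟩ := hnear.2 _ hgz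
    obtain ⟨w, hw, rfl⟩ := hi (mem_ball.2 hxg)
    exact (hV i).inter_frontier_eq.subset ⟨hFV i hw, hx⟩
  rw [← hV₀.interior_eq, ← closure_sdiff_frontier]
  exact ⟨hclosure, hfrontier⟩

def etaSet (Ω : Set ℂ) (p : ℂ) : Set ℝ :=
  {r : ℝ | ∃ f : ℂ → ℂ, DifferentiableOn ℂ f (ball (0 : ℂ) 1) ∧ f 0 = p ∧
    (∀ z ∈ ball (0 : ℂ) 1, f z ∈ Ω) ∧ r = ‖deriv f 0‖}

theorem eta_eq_sSup_etaSet (Ω : Set ℂ) (p : ℂ) : eta Ω p = sSup (etaSet Ω p) := rfl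

theorem eta_nonneg (Ω : Set ℂ) (p : ℂ) : 0 ≤ eta Ω p :=
  Real.sSup_nonneg (by rintro _ ⟨f, -, -, -, rfl⟩; exact norm_nonneg _)

theorem norm_deriv_le_eta {Ω : Set ℂ} (hΩ : Bornology.IsBounded Ω) {f : ℂ → ℂ}
    (hf : DifferentiableOn ℂ f (ball 0 1)) (hfΩ : MapsTo f (ball 0 1) Ω) :
    ‖deriv f 0‖ ≤ eta Ω (f 0) := by
  refine le_csSup ?_ ⟨f, hf, rfl, hfΩ, rfl⟩
  obtain ⟨R, hR⟩ := hΩ.subset_closedBall 0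
  refine ⟨2 * R, ?_⟩
  rintro _ ⟨h, hh, -, hhΩ, rfl⟩
  exact (Complex.norm_deriv_le_div_of_mapsTo_ball hh
    ((MapsTo.mono_right hhΩ hR).closedBall_apply (mem_ball_self one_pos)) one_pos).trans_eq
    (div_one _)

theorem mul_norm_deriv_le_eta {Ω : Set ℂ} (hΩ : Bornology.IsBounded Ω) {f : ℂ → ℂ}
    (hf : DifferentiableOn ℂ f (ball 0 1)) {t : ℝ} (ht0 : 0 ≤ t) (ht1 : t < 1)
    (hfΩ : MapsTo f (closedBall 0 t) Ω) : t * ‖deriv f 0‖ ≤ eta Ω (f 0) := by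
  have hscale : MapsTo (fun z : ℂ => (t : ℂ) * z) (ball 0 1) (closedBall 0 t) := fun z hz => by
    rw [mem_closedBall_zero_iff, norm_mul, Complex.norm_real, Real.norm_of_nonneg ht0]
    exact mul_le_of_le_one_right ht0 (mem_ball_zero_iff.1 hz).le
  have h := norm_deriv_le_eta hΩ
    (hf.comp (differentiable_id.const_mul _).differentiableOn
      (hscale.mono_right (closedBall_subset_ball ht1)))
    (hfΩ.comp hscale)
  rw [Function.comp_def, deriv_comp_mul_left, mul_zero, smul_eq_mul, norm_mul, Complex.norm_real,
    Real.norm_of_nonneg ht0] at h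
  simpa only [mul_zero] using h

theorem exists_lt_norm_deriv_of_lt_eta {Ω : Set ℂ} {p : ℂ} {b : ℝ} (hb0 : 0 ≤ b)
    (hb : b < eta Ω p) : ∃ f : ℂ → ℂ, DifferentiableOn ℂ f (ball 0 1) ∧ f 0 = p ∧
      MapsTo f (ball 0 1) Ω ∧ b < ‖deriv f 0‖ := by
  rw [eta_eq_sSup_etaSet] at hb
  have hne : (etaSet Ω p).Nonempty := by
    by_contra h
    rw [not_nonempty_iff_eq_empty.1 h, Real.sSup_empty] at hb
    exact hb.not_ge hb0
  obtain ⟨_, ⟨f, hf, hf0, hfΩ, rfl⟩, hbf⟩ := exists_lt_of_lt_csSup hne hb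
  exact ⟨f, hf, hf0, hfΩ, hbf⟩

theorem eventually_lt_eta {ι : Type*} {l : Filter ι} {V : ι → Set ℂ} {V₀ : Set ℂ} {p : ℂ}
    (hV : ∀ i, Bornology.IsBounded (V i))
    (hsub : ∀ K, IsCompact K → K ⊆ V₀ → ∀ᶠ i in l, K ⊆ V i) {b : ℝ} (hb : b < eta V₀ p) :
    ∀ᶠ i in l, b < eta (V i) p := by
  rcases lt_or_ge b 0 with hb0 | hb0
  · exact Eventually.of_forall fun i => hb0.trans_le (eta_nonneg _ _)
  obtain ⟨f, hf, rfl, hfV₀, hbf⟩ := exists_lt_norm_deriv_of_lt_eta hb0 hb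
  have hscale : Tendsto (fun t : ℝ => t * ‖deriv f 0‖) (𝓝[<] 1) (𝓝 ‖deriv f 0‖) := by
    have hcont : Continuous fun t : ℝ => t * ‖deriv f 0‖ := continuous_id.mul continuous_const
    simpa using (hcont.tendsto 1).mono_left nhdsWithin_le_nhds
  obtain ⟨t, ⟨ht0, ht1⟩, hbt⟩ :=
    (Eventually.and (Ioo_mem_nhdsLT zero_lt_one) (hscale.eventually (lt_mem_nhds hbf))).exists
  have hball : closedBall (0 : ℂ) t ⊆ ball 0 1 := closedBall_subset_ball ht1
  filter_upwards [hsub _ ((isCompact_closedBall 0 t).image_of_continuousOn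
    (hf.continuousOn.mono hball)) (mapsTo_iff_image_subset.1 (hfV₀.mono_left hball))] with i hi
  exact hbt.trans_le (mul_norm_deriv_le_eta (hV i) hf ht0.le ht1 (mapsTo_iff_image_subset.2 hi))

theorem eventually_eta_lt {W : ℕ → Set ℂ} {W₀ : Set ℂ} {p : ℂ} (hW : ∀ n, IsOpen (W n))
    (hWb : Bornology.IsBounded (⋃ n, W n)) (hW₀ : IsOpen W₀) (hW₀b : Bornology.IsBounded W₀)
    (hcl : Tendsto (fun n => hausdorffEDist (W n) W₀) atTop (𝓝 0))
    (hbd : Tendsto (fun n => hausdorffEDist (frontier (W n)) (frontier W₀)) atTop (𝓝 0))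
    {b : ℝ} (hb : eta W₀ p < b) : ∀ᶠ n in atTop, eta (W n) p < b := by
  obtain ⟨c, hc⟩ := exists_between hb
  by_contra h
  obtain ⟨φ, hφ, hbφ⟩ :=
    extraction_of_frequently_atTop ((not_eventually.1 h).mono fun n => le_of_not_gt)
  choose G hG hG0 hGW hGc using fun k =>
    exists_lt_norm_deriv_of_lt_eta ((eta_nonneg _ _).trans hc.1.le) (hc.2.trans_le (hbφ k))
  obtain ⟨M, hM⟩ := hWb.subset_closedBall 0
  obtain ⟨g, ψ, hψ, hGg⟩ := exists_subseq_tendstoLocallyUniformlyOn_of_norm_le isOpen_ball hG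
    fun k z hz => mem_closedBall_zero_iff.1 (hM (mem_iUnion.2 ⟨φ k, hGW k hz⟩))
  have hGψ : ∀ᶠ k in atTop, DifferentiableOn ℂ (G (ψ k)) (ball 0 1) :=
    Eventually.of_forall fun k => hG (ψ k)
  have hg : DifferentiableOn ℂ g (ball 0 1) := hGg.differentiableOn hGψ isOpen_ball
  have hg0 : g 0 = p := tendsto_nhds_unique (hGg.tendsto_at (mem_ball_self one_pos))
    (by simp only [hG0]; exact tendsto_const_nhds)
  have hg' : c ≤ ‖deriv g 0‖ :=
    ge_of_tendsto ((hGg.deriv hGψ isOpen_ball).tendsto_at (mem_ball_self one_pos)).norm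
      (Eventually.of_forall fun k => (hGc (ψ k)).le)
  have hsub := (hφ.comp hψ).tendsto_atTop
  have hgW₀ : MapsTo g (ball 0 1) W₀ :=
    mapsTo_of_tendstoLocallyUniformlyOn (fun k => hW (φ (ψ k))) hW₀ (hcl.comp hsub)
      (hbd.comp hsub) isOpen_ball (fun k => hG (ψ k)) (fun k => hGW (ψ k)) hGg
      fun z hz => eventually_ne_of_deriv_ne_zero isOpen_ball (convex_ball 0 1).isPreconnected hg
        (mem_ball_self one_pos)
        (norm_pos_iff.1 (((eta_nonneg _ _).trans_lt hc.1).trans_le hg')) hz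
  linarith [hg0 ▸ norm_deriv_le_eta hW₀b hg hgW₀]

theorem eta_pointwise_convergence_of_hausdorff_convergence_general
    (U : Set ℂ)
    (hUbdd : Bornology.IsBounded U)
    (W : ℕ → Set ℂ) (W₀ : Set ℂ)
    (hWopen : ∀ n, IsOpen (W n))
    (hWbdd : ∀ n, Bornology.IsBounded (W n))
    (hWU : ∀ n, W n ⊆ U) (h0 : ∀ n, (0 : ℂ) ∈ W n)
    (hW₀open : IsOpen W₀)
    (hW₀bdd : Bornology.IsBounded W₀)
    (hcl : Tendsto (fun n => hausdorffDist (closure (W n)) (closure W₀)) atTop (nhds 0))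
    (hbd : Tendsto (fun n => hausdorffDist (frontier (W n)) (frontier W₀)) atTop (nhds 0)) :
    ∀ p ∈ W₀, Tendsto (fun n => eta (W n) p) atTop (nhds (eta W₀ p)) := by
  intro p hp
  have hcl' : Tendsto (fun n => hausdorffEDist (W n) W₀) atTop (𝓝 0) :=
    tendsto_hausdorffEDist_of_tendsto_hausdorffDist
      (fun n => hausdorffEDist_ne_top_of_nonempty_of_bounded ⟨0, h0 n⟩ ⟨p, hp⟩ (hWbdd n) hW₀bdd)
      (by simpa only [hausdorffDist_closure] using hcl)
  have hbd' : Tendsto (fun n => hausdorffEDist (frontier (W n)) (frontier W₀)) atTop (𝓝 0) :=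
    tendsto_hausdorffEDist_of_tendsto_hausdorffDist
      (fun n => hausdorffEDist_frontier_ne_top ⟨0, h0 n⟩ ⟨p, hp⟩ (hWbdd n) hW₀bdd) hbd
  refine tendsto_order.2 ⟨fun b hb => eventually_lt_eta hWbdd (fun K hK hKW₀ =>
    eventually_subset_of_tendsto_hausdorffEDist hWopen hW₀open hcl' hbd' hK hKW₀) hb,
    fun b hb => eventually_eta_lt hWopen (hUbdd.subset (iUnion_subset hWU)) hW₀open hW₀bdd
      hcl' hbd' hb⟩

/-- Theorems 1.9 and 1.4 combined, for the trivial single-leaf foliation of a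
bounded plane domain `U`: if the bounded connected open sets `W n ⊆ U` converge
to the bounded connected open set `W₀ ⊆ U` in the Hausdorff sense, then
`η_{W n} p → η_{W₀} p` for every `p ∈ W₀`. -/
theorem eta_pointwise_convergence_of_hausdorff_convergence
    (U : Set ℂ) (hUopen : IsOpen U) (hUconn : IsConnected U)
    (hUbdd : Bornology.IsBounded U)
    (W : ℕ → Set ℂ) (W₀ : Set ℂ)
    (hWopen : ∀ n, IsOpen (W n)) (hWconn : ∀ n, IsConnected (W n))
    (hWbdd : ∀ n, Bornology.IsBounded (W n))
    (hWU : ∀ n, W n ⊆ U) (h0 : ∀ n, (0 : ℂ) ∈ W n)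
    (hW₀open : IsOpen W₀) (hW₀conn : IsConnected W₀)
    (hW₀bdd : Bornology.IsBounded W₀) (hW₀U : W₀ ⊆ U) (h0W₀ : (0 : ℂ) ∈ W₀)
    (hcl : Tendsto (fun n => hausdorffDist (closure (W n)) (closure W₀)) atTop (nhds 0))
    (hbd : Tendsto (fun n => hausdorffDist (frontier (W n)) (frontier W₀)) atTop (nhds 0)) :
    ∀ p ∈ W₀, Tendsto (fun n => eta (W n) p) atTop (nhds (eta W₀ p)) :=
  eta_pointwise_convergence_of_hausdorff_convergence_general U hUbdd W W₀ hWopen hWbdd hWU h0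
    hW₀open hW₀bdd hcl hbd
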